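/- Integrals of the degenerate Neumann system: at every point (x,y) ∈ ℝ^{n+1} × ℝ^{n+1} with ⟨x,x⟩ = 1 and ⟨x,y⟩ = 0, the Dirac bracket of the Neumann Hamiltonian H with each of the functions F_σ (σ = 0,…,ℓ) vanishes, {F_σ, H}(x,y) = 0, and likewise {L_{ik}, H}(x,y) = 0 for all indices i, k lying in the same index set I_σ. -/

import Mathlib

noncomputable section

/-- The canonical Poisson bracket on `T*ℝ^N = ℝ^N × ℝ^N`:
`[f,g] = ∑ ν (∂f/∂x_ν · ∂g/∂y_ν − ∂f/∂y_ν · ∂g/∂x_ν)`. -/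
def canPB {N : ℕ} (f g : (Fin N → ℝ) × (Fin N → ℝ) → ℝ)
    (p : (Fin N → ℝ) × (Fin N → ℝ)) : ℝ :=
  ∑ i : Fin N,
    ((fderiv ℝ f p) ((Pi.single i 1 : Fin N → ℝ), 0) *
        (fderiv ℝ g p) (0, (Pi.single i 1 : Fin N → ℝ))
      - (fderiv ℝ f p) (0, (Pi.single i 1 : Fin N → ℝ)) *
        (fderiv ℝ g p) ((Pi.single i 1 : Fin N → ℝ), 0))

/-- The constraint function `C1(x,y) = ⟨x,x⟩`. -/
def C1fun {N : ℕ} (p : (Fin N → ℝ) × (Fin N → ℝ)) : ℝ := ∑ ν, p.1 ν * p.1 ν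

/-- The constraint function `C2(x,y) = ⟨x,y⟩`. -/
def C2fun {N : ℕ} (p : (Fin N → ℝ) × (Fin N → ℝ)) : ℝ := ∑ ν, p.1 ν * p.2 ν

/-- The Dirac bracket
`{f,g} = [f,g] + (1/(2C1))·[f,C1]·[C2,g] − (1/(2C1))·[f,C2]·[C1,g]`. -/
def diracPB {N : ℕ} (f g : (Fin N → ℝ) × (Fin N → ℝ) → ℝ)
    (p : (Fin N → ℝ) × (Fin N → ℝ)) : ℝ :=
  canPB f g p + (1 / (2 * C1fun p)) * canPB f C1fun p * canPB C2fun g p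
    - (1 / (2 * C1fun p)) * canPB f C2fun p * canPB C1fun g p

open scoped Classical

/-- The angular momentum component `L_{νκ}(x,y) = x_ν y_κ − x_κ y_ν`. -/
def Lfun {N : ℕ} (ν κ : Fin N) (p : (Fin N → ℝ) × (Fin N → ℝ)) : ℝ :=
  p.1 ν * p.2 κ - p.1 κ * p.2 ν

/-- The integral `F_σ = ∑_{i∈I_σ} x_i² + ∑_{τ≠σ} ∑_{k∈I_σ} ∑_{l∈I_τ} L_{kl}²/(b_σ − b_τ)`
of the degenerate Neumann system, where `I_σ = {ν : a_ν = b_σ}`. -/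
def Fint {n ℓ : ℕ} (a : Fin (n + 1) → ℝ) (b : Fin (ℓ + 1) → ℝ) (σ : Fin (ℓ + 1))
    (p : (Fin (n + 1) → ℝ) × (Fin (n + 1) → ℝ)) : ℝ :=
  (∑ i : Fin (n + 1), if a i = b σ then (p.1 i) ^ 2 else 0)
    + ∑ τ : Fin (ℓ + 1), if τ ≠ σ then
        ∑ k : Fin (n + 1), ∑ l : Fin (n + 1),
          (if a k = b σ ∧ a l = b τ then (Lfun k l p) ^ 2 / (b σ - b τ) else 0)
      else 0

/-- The Neumann Hamiltonian `H(x,y) = ½⟨y,y⟩ + ½ ∑_ν a_ν x_ν²`. -/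
def neumannH {n : ℕ} (a : Fin (n + 1) → ℝ)
    (p : (Fin (n + 1) → ℝ) × (Fin (n + 1) → ℝ)) : ℝ :=
  (1 / 2) * (∑ ν, (p.2 ν) ^ 2) + (1 / 2) * ∑ ν, a ν * (p.1 ν) ^ 2

/-!
On the constraint set both constraint brackets in the Dirac bracket vanish: `[C1, H] = 2 C2`,
and `[L_kl, C1] = 0`, hence also `[F_σ, C1] = 0` since `F_σ` is built from the `x_i` and the
`L_kl`. So `{f, H} = [f, H]` there, and `[f, H]` is the derivative of `f` along the Hamiltonian
vector field `X_H = (y, -a x)`. Along `X_H` the momentum `L_kl` moves at rate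
`(a_k - a_l) x_k x_l`, which is `0` inside one index set and, for `k ∈ I_σ`, `l ∈ I_τ`, cancels
the denominator `b_σ - b_τ` of `F_σ`. What is left of `[F_σ, H]` is
`2 ∑_{k ∈ I_σ} x_k y_k + 2 ∑_{k ∈ I_σ, l ∉ I_σ} L_kl x_k x_l`, and the double sum equals
`-∑_{k ∈ I_σ} x_k y_k` once `⟨x, x⟩ = 1` and `⟨x, y⟩ = 0`.
-/

theorem Finset.sum_filter_ne_sum_fiber {ι κ β M : Type*} [Fintype ι] [Fintype κ]
    [DecidableEq ι] [DecidableEq κ] [DecidableEq β] [AddCommMonoid M] {a : ι → β} {b : κ → β}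
    (hb : Function.Injective b) (hab : ∀ i, ∃ τ, a i = b τ) (σ : κ) (f : ι → M) :
    ∑ τ ∈ {τ | τ ≠ σ}, ∑ l ∈ {l | a l = b τ}, f l =
      ∑ l ∈ ({l | a l = b σ} : Finset ι)ᶜ, f l := by
  rw [← Finset.sum_biUnion]
  · congr 1
    ext l
    obtain ⟨τ, hτ⟩ := hab l
    simp only [Finset.mem_biUnion, Finset.mem_filter, Finset.mem_univ, true_and,
      Finset.mem_compl, hτ, hb.eq_iff]
    exact ⟨fun ⟨_, hne, h⟩ => h ▸ hne, fun h => ⟨τ, h, rfl⟩⟩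
  · intro τ _ τ' _ hne
    simp only [Function.onFun, Finset.disjoint_filter]
    intro l _ h h'
    exact hne (hb (h.symm.trans h'))

abbrev PhaseSpace (N : ℕ) := (Fin N → ℝ) × (Fin N → ℝ)

section PoissonBracket

variable {N : ℕ}

def hamiltonianVectorField (g : PhaseSpace N → ℝ) (p : PhaseSpace N) : PhaseSpace N :=
  (fun i => fderiv ℝ g p (0, Pi.single i 1), fun i => -fderiv ℝ g p (Pi.single i 1, 0))

theorem PhaseSpace.eq_sum_single (v : PhaseSpace N) :
    v = ∑ i, (v.1 i • ((Pi.single i 1 : Fin N → ℝ), 0) +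
      v.2 i • (0, (Pi.single i 1 : Fin N → ℝ))) := by
  ext j <;> simp [Prod.fst_sum, Prod.snd_sum, Finset.sum_apply, Pi.single_apply]

theorem canPB_eq_fderiv (f g : PhaseSpace N → ℝ) (p : PhaseSpace N) :
    canPB f g p = fderiv ℝ f p (hamiltonianVectorField g p) := by
  conv_rhs => rw [PhaseSpace.eq_sum_single (hamiltonianVectorField g p)]
  simp only [map_sum, map_add, map_smul, hamiltonianVectorField, smul_eq_mul, canPB]
  congr 1
  ext i
  ring

theorem diracPB_eq_canPB {f g : PhaseSpace N → ℝ} {p : PhaseSpace N}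
    (hf : canPB f C1fun p = 0) (hg : canPB C1fun g p = 0) : diracPB f g p = canPB f g p := by
  simp [diracPB, hf, hg]

theorem hasFDerivAt_fst_apply (i : Fin N) (p : PhaseSpace N) :
    HasFDerivAt (fun q : PhaseSpace N => q.1 i)
      ((ContinuousLinearMap.proj i).comp (ContinuousLinearMap.fst ℝ _ _)) p :=
  ((ContinuousLinearMap.proj (R := ℝ) (φ := fun _ : Fin N => ℝ) i).comp
    (ContinuousLinearMap.fst ℝ (Fin N → ℝ) (Fin N → ℝ))).hasFDerivAt

theorem hasFDerivAt_snd_apply (i : Fin N) (p : PhaseSpace N) :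
    HasFDerivAt (fun q : PhaseSpace N => q.2 i)
      ((ContinuousLinearMap.proj i).comp (ContinuousLinearMap.snd ℝ _ _)) p :=
  ((ContinuousLinearMap.proj (R := ℝ) (φ := fun _ : Fin N => ℝ) i).comp
    (ContinuousLinearMap.snd ℝ (Fin N → ℝ) (Fin N → ℝ))).hasFDerivAt

theorem fderiv_Lfun_apply (k l : Fin N) (p v : PhaseSpace N) :
    fderiv ℝ (Lfun k l) p v =
      v.1 k * p.2 l + p.1 k * v.2 l - (v.1 l * p.2 k + p.1 l * v.2 k) := by
  have h : HasFDerivAt (Lfun k l) _ p :=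
    ((hasFDerivAt_fst_apply k p).mul (hasFDerivAt_snd_apply l p)).sub
      ((hasFDerivAt_fst_apply l p).mul (hasFDerivAt_snd_apply k p))
  rw [h.fderiv]
  simp only [sub_apply, add_apply,
    smul_apply, ContinuousLinearMap.comp_apply, ContinuousLinearMap.coe_fst',
    ContinuousLinearMap.coe_snd', ContinuousLinearMap.proj_apply, smul_eq_mul]
  ring

theorem fderiv_C1fun_apply (p v : PhaseSpace N) :
    fderiv ℝ C1fun p v = 2 * ∑ i, p.1 i * v.1 i := by
  have h : HasFDerivAt C1fun _ p := HasFDerivAt.fun_sum (u := Finset.univ) fun i _ =>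
    (hasFDerivAt_fst_apply i p).mul (hasFDerivAt_fst_apply i p)
  rw [h.fderiv]
  simp only [sum_apply, add_apply,
    smul_apply, ContinuousLinearMap.comp_apply, ContinuousLinearMap.coe_fst',
    ContinuousLinearMap.proj_apply, smul_eq_mul, Finset.mul_sum]
  ring_nf

theorem hamiltonianVectorField_C1fun (p : PhaseSpace N) :
    hamiltonianVectorField C1fun p = (0, fun i => -(2 * p.1 i)) := by
  ext i <;> simp [hamiltonianVectorField, fderiv_C1fun_apply, Pi.single_apply]

theorem canPB_Lfun_C1fun (k l : Fin N) (p : PhaseSpace N) : canPB (Lfun k l) C1fun p = 0 := by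
  rw [canPB_eq_fderiv, fderiv_Lfun_apply, hamiltonianVectorField_C1fun]
  simp only [Pi.zero_apply]
  ring

theorem sum_Lfun_mul_compl (s : Finset (Fin N)) {p : PhaseSpace N} (h1 : C1fun p = 1)
    (h2 : C2fun p = 0) :
    ∑ k ∈ s, ∑ l ∈ sᶜ, Lfun k l p * (p.1 k * p.1 l) = -∑ k ∈ s, p.1 k * p.2 k := by
  have hsplit : ∑ k ∈ s, ∑ l ∈ sᶜ, Lfun k l p * (p.1 k * p.1 l) =
      (∑ k ∈ s, p.1 k * p.1 k) * (∑ l ∈ sᶜ, p.1 l * p.2 l) -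
        (∑ k ∈ s, p.1 k * p.2 k) * (∑ l ∈ sᶜ, p.1 l * p.1 l) := by
    simp only [Finset.sum_mul_sum, ← Finset.sum_sub_distrib, Lfun]
    exact Finset.sum_congr rfl fun k _ => Finset.sum_congr rfl fun l _ => by ring
  have hA := Finset.sum_add_sum_compl s fun k => p.1 k * p.1 k
  have hB := Finset.sum_add_sum_compl s fun k => p.1 k * p.2 k
  rw [← C1fun, h1] at hA
  rw [← C2fun, h2] at hB
  rw [hsplit]
  linear_combination (∑ k ∈ s, p.1 k * p.1 k) * hB - (∑ k ∈ s, p.1 k * p.2 k) * hA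

end PoissonBracket

section Neumann

variable {n ℓ : ℕ}

theorem fderiv_neumannH_apply (a : Fin (n + 1) → ℝ) (p v : PhaseSpace (n + 1)) :
    fderiv ℝ (neumannH a) p v = ∑ i, p.2 i * v.2 i + ∑ i, a i * p.1 i * v.1 i := by
  have h : HasFDerivAt (neumannH a) _ p :=
    ((HasFDerivAt.fun_sum (u := Finset.univ) fun i _ =>
      (hasFDerivAt_snd_apply i p).pow 2).const_mul (1 / 2)).add
    ((HasFDerivAt.fun_sum (u := Finset.univ) fun i _ =>
      ((hasFDerivAt_fst_apply i p).pow 2).const_mul (a i)).const_mul (1 / 2))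
  rw [h.fderiv]
  simp only [add_apply, smul_apply,
    sum_apply, ContinuousLinearMap.comp_apply, ContinuousLinearMap.coe_fst',
    ContinuousLinearMap.coe_snd', ContinuousLinearMap.proj_apply, smul_eq_mul, nsmul_eq_mul,
    Finset.mul_sum]
  ring_nf

theorem hamiltonianVectorField_neumannH (a : Fin (n + 1) → ℝ) (p : PhaseSpace (n + 1)) :
    hamiltonianVectorField (neumannH a) p = (p.2, fun i => -(a i * p.1 i)) := by
  ext i <;> simp [hamiltonianVectorField, fderiv_neumannH_apply, Pi.single_apply]

theorem canPB_C1fun_neumannH (a : Fin (n + 1) → ℝ) (p : PhaseSpace (n + 1)) :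
    canPB C1fun (neumannH a) p = 2 * C2fun p := by
  rw [canPB_eq_fderiv, fderiv_C1fun_apply, hamiltonianVectorField_neumannH, C2fun]

theorem canPB_Lfun_neumannH (a : Fin (n + 1) → ℝ) (k l : Fin (n + 1)) (p : PhaseSpace (n + 1)) :
    canPB (Lfun k l) (neumannH a) p = (a k - a l) * (p.1 k * p.1 l) := by
  rw [canPB_eq_fderiv, fderiv_Lfun_apply, hamiltonianVectorField_neumannH]
  ring

theorem Fint_eq (a : Fin (n + 1) → ℝ) (b : Fin (ℓ + 1) → ℝ) (σ : Fin (ℓ + 1)) :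
    Fint a b σ = fun q => ∑ i ∈ {i | a i = b σ}, q.1 i ^ 2 +
      ∑ τ ∈ {τ | τ ≠ σ}, ∑ k ∈ {k | a k = b σ}, ∑ l ∈ {l | a l = b τ},
        Lfun k l q ^ 2 / (b σ - b τ) := by
  funext q
  simp only [Fint, Finset.sum_filter, ite_and, Finset.sum_ite_irrel, Finset.sum_const_zero]

theorem canPB_Fint (a : Fin (n + 1) → ℝ) (b : Fin (ℓ + 1) → ℝ) (σ : Fin (ℓ + 1))
    (g : PhaseSpace (n + 1) → ℝ) (p : PhaseSpace (n + 1)) :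
    canPB (Fint a b σ) g p =
      ∑ i ∈ {i | a i = b σ}, 2 * p.1 i * (hamiltonianVectorField g p).1 i +
        ∑ τ ∈ {τ | τ ≠ σ}, ∑ k ∈ {k | a k = b σ}, ∑ l ∈ {l | a l = b τ},
          2 * Lfun k l p * canPB (Lfun k l) g p / (b σ - b τ) := by
  have hL (k l : Fin (n + 1)) : HasFDerivAt (Lfun k l) (fderiv ℝ (Lfun k l) p) p := by
    apply DifferentiableAt.hasFDerivAt
    unfold Lfun
    fun_prop
  have hF := (HasFDerivAt.fun_sum (u := {i | a i = b σ}) fun i _ =>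
    (hasFDerivAt_fst_apply i p).pow 2).fun_add
    (HasFDerivAt.fun_sum (u := {τ | τ ≠ σ}) fun τ _ =>
      HasFDerivAt.fun_sum (u := {k | a k = b σ}) fun k _ =>
        HasFDerivAt.fun_sum (u := {l | a l = b τ}) fun l _ =>
          ((hL k l).pow 2).mul_const (b σ - b τ)⁻¹)
  rw [canPB_eq_fderiv, Fint_eq]
  simp only [div_eq_mul_inv]
  rw [hF.fderiv]
  simp [canPB_eq_fderiv, mul_comm]

theorem canPB_Fint_C1fun (a : Fin (n + 1) → ℝ) (b : Fin (ℓ + 1) → ℝ) (σ : Fin (ℓ + 1))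
    (p : PhaseSpace (n + 1)) : canPB (Fint a b σ) C1fun p = 0 := by
  simp [canPB_Fint, hamiltonianVectorField_C1fun, canPB_Lfun_C1fun]

theorem canPB_Fint_neumannH {a : Fin (n + 1) → ℝ} {b : Fin (ℓ + 1) → ℝ}
    (hb : Function.Injective b) (hab : ∀ ν, ∃ σ, a ν = b σ) (σ : Fin (ℓ + 1))
    {p : PhaseSpace (n + 1)} (h1 : C1fun p = 1) (h2 : C2fun p = 0) :
    canPB (Fint a b σ) (neumannH a) p = 0 := by
  have hcancel : ∀ τ ∈ ({τ | τ ≠ σ} : Finset _),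
      ∑ k ∈ {k | a k = b σ}, ∑ l ∈ {l | a l = b τ},
        2 * Lfun k l p * canPB (Lfun k l) (neumannH a) p / (b σ - b τ) =
      ∑ k ∈ {k | a k = b σ}, ∑ l ∈ {l | a l = b τ}, 2 * (Lfun k l p * (p.1 k * p.1 l)) := by
    intro τ hτ
    refine Finset.sum_congr rfl fun k hk => Finset.sum_congr rfl fun l hl => ?_
    simp only [Finset.mem_filter, Finset.mem_univ, true_and] at hτ hk hl
    have hne : b σ - b τ ≠ 0 := sub_ne_zero.2 (hb.ne (Ne.symm hτ))
    rw [canPB_Lfun_neumannH, hk, hl]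
    field_simp
  rw [canPB_Fint, Finset.sum_congr rfl hcancel, Finset.sum_comm,
    Finset.sum_congr rfl fun k _ => Finset.sum_filter_ne_sum_fiber hb hab σ _]
  simp only [hamiltonianVectorField_neumannH, mul_assoc, ← Finset.mul_sum]
  rw [sum_Lfun_mul_compl _ h1 h2]
  ring

end Neumann

theorem stmt9_general (n ℓ : ℕ) (a : Fin (n + 1) → ℝ) (b : Fin (ℓ + 1) → ℝ)
    (hb : StrictMono b)
    (hab : ∀ ν, ∃ σ, a ν = b σ)
    (p : (Fin (n + 1) → ℝ) × (Fin (n + 1) → ℝ))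
    (h1 : C1fun p = 1) (h2 : C2fun p = 0) :
    (∀ σ, diracPB (Fint a b σ) (neumannH a) p = 0) ∧
    (∀ σ : Fin (ℓ + 1), ∀ i k : Fin (n + 1), a i = b σ → a k = b σ →
      diracPB (Lfun i k) (neumannH a) p = 0) := by
  have hC1H : canPB C1fun (neumannH a) p = 0 := by
    rw [canPB_C1fun_neumannH, h2, mul_zero]
  refine ⟨fun σ => ?_, fun σ i k hi hk => ?_⟩
  · rw [diracPB_eq_canPB (canPB_Fint_C1fun a b σ p) hC1H]
    exact canPB_Fint_neumannH hb.injective hab σ h1 h2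
  · rw [diracPB_eq_canPB (canPB_Lfun_C1fun i k p) hC1H, canPB_Lfun_neumannH, hi, hk, sub_self,
      zero_mul]

/-- **Integrals of the degenerate Neumann system.**
At every point `(x,y)` with `⟨x,x⟩ = 1` and `⟨x,y⟩ = 0` the Dirac bracket of the Neumann
Hamiltonian with each `F_σ` vanishes, and likewise `{L_{ik}, H} = 0` whenever the indices
`i, k` lie in the same index set `I_σ`. -/
theorem stmt9 (n ℓ : ℕ) (a : Fin (n + 1) → ℝ) (b : Fin (ℓ + 1) → ℝ)
    (hb : StrictMono b)
    (hab : ∀ ν, ∃ σ, a ν = b σ) (hba : ∀ σ, ∃ ν, a ν = b σ)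
    (p : (Fin (n + 1) → ℝ) × (Fin (n + 1) → ℝ))
    (h1 : C1fun p = 1) (h2 : C2fun p = 0) :
    (∀ σ, diracPB (Fint a b σ) (neumannH a) p = 0) ∧
    (∀ σ : Fin (ℓ + 1), ∀ i k : Fin (n + 1), a i = b σ → a k = b σ →
      diracPB (Lfun i k) (neumannH a) p = 0) :=
  stmt9_general n ℓ a b hb hab p h1 h2
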